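/- Let L/K be a finite separable totally ramified extension of local fields of degree n, let v: L* → ℤ/nℤ be the map x ↦ (v_L(x) mod n), and for a sub-K-vector space V of L set s(V) = {v(x) : x ∈ V, x ≠ 0} ⊆ ℤ/nℤ. Let d̄ = (−d_{L/K} − 1 mod nℤ) ∈ ℤ/nℤ, and let V^⊥ = {y ∈ L : Tr_{L/K}(xy) = 0 for all x ∈ V} be the orthogonal space of V with respect to the trace form. Then s(V^⊥) is the complement in ℤ/nℤ of the set d̄ − s(V) = {d̄ − a : a ∈ s(V)}. -/

import Mathlib

/-- A local field structure on a field `K`: a normalized (surjective) discrete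
valuation `v : K* ↠ ℤ`, extended by a junk value at `0`, with respect to which
`K` is complete. -/
structure LocalFieldStruct (K : Type) [Field K] where
  /-- the valuation; its value at `0` is irrelevant -/
  v : K → ℤ
  v_mul : ∀ x y : K, x ≠ 0 → y ≠ 0 → v (x * y) = v x + v y
  v_add : ∀ x y : K, x ≠ 0 → y ≠ 0 → x + y ≠ 0 → min (v x) (v y) ≤ v (x + y)
  v_surj : ∀ n : ℤ, ∃ x : K, x ≠ 0 ∧ v x = n
  complete : ∀ a : ℕ → K,
      (∀ N : ℤ, ∃ M : ℕ, ∀ m : ℕ, M ≤ m → ∀ n : ℕ, M ≤ n →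
        a m = a n ∨ N ≤ v (a m - a n)) →
      ∃ x : K, ∀ N : ℤ, ∃ M : ℕ, ∀ n : ℕ, M ≤ n → a n = x ∨ N ≤ v (a n - x)

namespace LocalFieldStruct

variable {K L : Type} [Field K] [Field L]

/-- `x` lies in the valuation ring `O_K`. -/
def Integral (w : LocalFieldStruct K) (x : K) : Prop :=
  x = 0 ∨ 0 ≤ w.v x

/-- The residue characteristic of `K` is the prime `p`, i.e. `p` maps to `0`
in the residue field of the valuation ring. -/
def ResidueCharP (w : LocalFieldStruct K) (p : ℕ) : Prop :=
  p.Prime ∧ ((p : K) = 0 ∨ 0 < w.v (p : K))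

/-- `K` has mixed characteristic `(0, p)`: `K` has characteristic `0` and its
residue field has characteristic `p > 0`. -/
def MixedChar (w : LocalFieldStruct K) (p : ℕ) : Prop :=
  CharZero K ∧ p.Prime ∧ 0 < w.v (p : K)

/-- `e` is the ramification index `e_{L/K}`: the valuation of `L` restricted to
`K` is `e` times the valuation of `K`. -/
def IsRamificationIndex (wK : LocalFieldStruct K) (wL : LocalFieldStruct L)
    [Algebra K L] (e : ℕ) : Prop :=
  0 < e ∧ ∀ x : K, x ≠ 0 → wL.v (algebraMap K L x) = (e : ℤ) * wK.v x

/-- `d` is the valuation `d_{L/K}` of the different of `L/K`, characterized by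
`Tr_{L/K}(𝔭_L^i) ⊆ O_K ↔ i ≥ -d` for all `i : ℤ`. -/
def IsDifferentVal (wK : LocalFieldStruct K) (wL : LocalFieldStruct L)
    [Algebra K L] (d : ℤ) : Prop :=
  ∀ i : ℤ,
    (∀ x : L, (x ≠ 0 → i ≤ wL.v x) → wK.Integral (Algebra.trace K L x)) ↔ -d ≤ i

end LocalFieldStruct

/-- `x` is a normal basis generator of `L` over `K`: the Galois conjugates of
`x` form a `K`-basis of `L`. -/
def IsNormalElement (K : Type) [Field K] {L : Type} [Field L] [Algebra K L]
    (x : L) : Prop :=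
  LinearIndependent K (fun σ : L ≃ₐ[K] L => σ x) ∧
    Submodule.span K (Set.range fun σ : L ≃ₐ[K] L => σ x) = ⊤

/-- The valuation criterion `VC(L/K)`, for an extension with ramification
index `e` and different of valuation `d`: every nonzero `x ∈ L` with
`v_L(x) ≡ -d-1 (mod e)` is a normal basis generator of `L` over `K`. -/
def VC (K : Type) [Field K] {L : Type} [Field L] [Algebra K L]
    (wL : LocalFieldStruct L) (e : ℕ) (d : ℤ) : Prop :=
  ∀ x : L, x ≠ 0 → Int.ModEq (e : ℤ) (wL.v x) (-d - 1) → IsNormalElement K x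

/-!
A nonzero `x ∈ L` has `v_L(c • x) = n v_K(c) + v_L(x)` for `c ∈ K^*`, so a `K`-combination of
elements with pairwise distinct classes mod `n` has summands of pairwise distinct valuations, and
none of them can be cancelled. Such elements are therefore linearly independent; in particular, as
`n = [L:K]`, the powers `π^i` (`0 ≤ i < n`) of a uniformizer form a basis, so the residue
extension is trivial: any `y` can be approximated by a `K`-multiple of any `x` in the class of `y`,
to strictly higher valuation. Iterating this inside a subspace `W` and passing to the limit in the
complete field `K` shows that `W` is spanned by representatives of `s(W)`, so `#s(W) = dim W`.

If `x ∈ V` and `y ∈ V^⊥` are nonzero with `v(xy) ≡ -d-1`, a `K`-multiple of `xy` has valuation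
exactly `-d-1`, and such an element has non-integral trace (otherwise the approximation above would
make `Tr(𝔭_L^{-d-1}) ⊆ O_K`), contradicting `Tr(xy) = 0`. Hence `s(V^⊥)` lies in the complement
of `d̄ - s(V)`, and both sets have `n - dim V` elements.
-/

namespace LocalFieldStruct

section Valuation

variable {K : Type} [Field K] (w : LocalFieldStruct K)

/-- `x ∈ 𝔭^N`; unlike `N ≤ w.v x`, this holds for `x = 0`. -/
def ValGe (N : ℤ) (x : K) : Prop :=
  x ≠ 0 → N ≤ w.v x

theorem v_one : w.v 1 = 0 := by
  simpa using (w.v_mul 1 1 one_ne_zero one_ne_zero).symm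

theorem v_neg {x : K} (hx : x ≠ 0) : w.v (-x) = w.v x := by
  have h : w.v (-1) = 0 := by
    have := w.v_mul (-1) (-1) (by norm_num) (by norm_num)
    rw [neg_mul_neg, one_mul, v_one] at this
    omega
  rw [neg_eq_neg_one_mul, w.v_mul _ _ (by norm_num) hx, h, zero_add]

theorem v_pow {x : K} (hx : x ≠ 0) (m : ℕ) : w.v (x ^ m) = m * w.v x := by
  induction m with
  | zero => simpa using w.v_one
  | succ k ih =>
    rw [pow_succ, w.v_mul _ _ (pow_ne_zero k hx) hx, ih]
    push_cast
    ring

variable {w} {M N : ℤ} {x y : K}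

theorem valGe_zero (N : ℤ) : w.ValGe N 0 :=
  fun h => absurd rfl h

theorem valGe_v (x : K) : w.ValGe (w.v x) x :=
  fun _ => le_rfl

theorem not_valGe_v_add_one (hx : x ≠ 0) : ¬ w.ValGe (w.v x + 1) x :=
  fun h => by have := h hx; omega

theorem integral_iff_valGe : w.Integral x ↔ w.ValGe 0 x :=
  or_iff_not_imp_left

theorem valGe_sub_iff : w.ValGe N (x - y) ↔ x = y ∨ N ≤ w.v (x - y) := by
  rw [← sub_eq_zero (a := x), or_iff_not_imp_left]
  rfl

theorem ValGe.mono (h : w.ValGe N x) (hMN : M ≤ N) : w.ValGe M x :=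
  fun hx => hMN.trans (h hx)

theorem ValGe.neg (h : w.ValGe N x) : w.ValGe N (-x) := fun hx => by
  rw [w.v_neg (neg_ne_zero.mp hx)]
  exact h (neg_ne_zero.mp hx)

theorem ValGe.add (hx : w.ValGe N x) (hy : w.ValGe N y) : w.ValGe N (x + y) := by
  intro hxy
  rcases eq_or_ne x 0 with rfl | hx0
  · simpa using hy (by simpa using hxy)
  rcases eq_or_ne y 0 with rfl | hy0
  · simpa using hx hx0
  exact (le_min (hx hx0) (hy hy0)).trans (w.v_add x y hx0 hy0 hxy)

theorem ValGe.sub (hx : w.ValGe N x) (hy : w.ValGe N y) : w.ValGe N (x - y) := by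
  simpa only [sub_eq_add_neg] using hx.add hy.neg

theorem ValGe.mul (hx : w.ValGe M x) (hy : w.ValGe N y) : w.ValGe (M + N) (x * y) :=
  fun hxy => by
    rw [w.v_mul x y (left_ne_zero_of_mul hxy) (right_ne_zero_of_mul hxy)]
    exact add_le_add (hx (left_ne_zero_of_mul hxy)) (hy (right_ne_zero_of_mul hxy))

theorem ValGe.sum {ι : Type} {s : Finset ι} {z : ι → K} (h : ∀ i ∈ s, w.ValGe N (z i)) :
    w.ValGe N (∑ i ∈ s, z i) := by
  induction s using Finset.cons_induction with
  | empty => simpa using valGe_zero N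
  | cons a s ha ih =>
    rw [Finset.sum_cons]
    exact (h a (Finset.mem_cons_self a s)).add (ih fun i hi => h i (Finset.mem_cons_of_mem hi))

/-- A summand of minimal valuation is the only one of that valuation, so it survives in the sum. -/
theorem ValGe.of_sum {ι : Type} [Fintype ι] {z : ι → K}
    (hz : ∀ i j, z i ≠ 0 → z j ≠ 0 → w.v (z i) = w.v (z j) → i = j)
    (h : w.ValGe N (∑ i, z i)) (i : ι) : w.ValGe N (z i) := by
  classical
  by_contra hi
  obtain ⟨hi0, hiN⟩ : z i ≠ 0 ∧ w.v (z i) < N := by simpa [ValGe] using hi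
  obtain ⟨j, hj, hmin⟩ := (Finset.univ.filter (z · ≠ 0)).exists_min_image (fun j => w.v (z j))
    ⟨i, by simpa using hi0⟩
  have hj0 : z j ≠ 0 := (Finset.mem_filter.mp hj).2
  have hrest : w.ValGe (w.v (z j) + 1) (∑ k ∈ Finset.univ.erase j, z k) := by
    refine ValGe.sum fun k hk hk0 => ?_
    have hle := hmin k (by simpa using hk0)
    have hne : w.v (z k) ≠ w.v (z j) := fun e => Finset.ne_of_mem_erase hk (hz k j hk0 hj0 e)
    omega
  have hsum := h.mono (show w.v (z j) + 1 ≤ N by have := hmin i (by simpa using hi0); omega)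
  rw [← Finset.add_sum_erase _ _ (Finset.mem_univ j)] at hsum
  exact not_valGe_v_add_one hj0 (by simpa using hsum.sub hrest)

variable (w)

theorem exists_limit {a : ℕ → K}
    (h : ∀ N, ∃ M, ∀ m ≥ M, ∀ m' ≥ M, w.ValGe N (a m - a m')) :
    ∃ x, ∀ N, ∀ᶠ m in Filter.atTop, w.ValGe N (a m - x) := by
  obtain ⟨x, hx⟩ := w.complete a fun N =>
    (h N).imp fun _ hM m hm m' hm' => valGe_sub_iff.mp (hM m hm m' hm')
  exact ⟨x, fun N => Filter.eventually_atTop.mpr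
    ((hx N).imp fun _ hM m hm => valGe_sub_iff.mpr (hM m hm))⟩

end Valuation

/-- `s(W) ⊆ ℤ/nℤ`. -/
def valClasses {K L : Type} [Field K] [Field L] [Algebra K L] (wL : LocalFieldStruct L) (n : ℕ)
    (W : Submodule K L) : Set (ZMod n) :=
  {a | ∃ x ∈ W, x ≠ 0 ∧ ((wL.v x : ℤ) : ZMod n) = a}

namespace IsRamificationIndex

variable {K L : Type} [Field K] [Field L] [Algebra K L]
  {wK : LocalFieldStruct K} {wL : LocalFieldStruct L} {n : ℕ}
  (htot : IsRamificationIndex wK wL n)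
include htot

theorem v_smul {c : K} {x : L} (hc : c ≠ 0) (hx : x ≠ 0) :
    wL.v (c • x) = n * wK.v c + wL.v x := by
  rw [Algebra.smul_def, wL.v_mul _ _ ((map_ne_zero _).mpr hc) hx, htot.2 c hc]

theorem cast_v_smul {c : K} {x : L} (hc : c ≠ 0) (hx : x ≠ 0) :
    ((wL.v (c • x) : ℤ) : ZMod n) = wL.v x := by
  simp [htot.v_smul hc hx]

theorem valGe_smul {N : ℤ} {c : K} (h : wK.ValGe N c) (x : L) :
    wL.ValGe (n * N + wL.v x) (c • x) := fun hcx => by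
  obtain ⟨hc, hx⟩ := smul_ne_zero_iff.mp hcx
  rw [htot.v_smul hc hx]
  have := h hc
  gcongr

theorem valGe_of_valGe_smul {N : ℤ} {c : K} {x : L} (hx : x ≠ 0)
    (h : wL.ValGe (n * N + wL.v x) (c • x)) : wK.ValGe N c := fun hc => by
  have := h (smul_ne_zero hc hx)
  rw [htot.v_smul hc hx] at this
  exact le_of_mul_le_mul_left (a := (n : ℤ)) (by omega) (by exact_mod_cast htot.1)

section Family

variable {ι : Type} [Fintype ι] {x : ι → L}

theorem valGe_smul_of_valGe_sum (hx : Function.Injective fun i => ((wL.v (x i) : ℤ) : ZMod n))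
    {N : ℤ} {c : ι → K} (h : wL.ValGe N (∑ i, c i • x i)) (i : ι) : wL.ValGe N (c i • x i) := by
  refine ValGe.of_sum (fun i j hi hj hij => hx ?_) h i
  obtain ⟨hci, hxi⟩ := smul_ne_zero_iff.mp hi
  obtain ⟨hcj, hxj⟩ := smul_ne_zero_iff.mp hj
  simp only [← htot.cast_v_smul hci hxi, ← htot.cast_v_smul hcj hxj, hij]

theorem linearIndependent (hx0 : ∀ i, x i ≠ 0)
    (hx : Function.Injective fun i => ((wL.v (x i) : ℤ) : ZMod n)) : LinearIndependent K x := by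
  rw [Fintype.linearIndependent_iff]
  intro c hc i
  by_contra hci
  have h := htot.valGe_smul_of_valGe_sum hx (hc ▸ valGe_zero (wL.v (c i • x i) + 1)) i
  exact not_valGe_v_add_one (smul_ne_zero hci (hx0 i)) h

/-- The residue extension is trivial: this is where `n = [L:K]` enters, through the basis
`π^i`, `0 ≤ i < n`, of `L` over `K`. -/
theorem exists_sub_algebraMap_valGe [FiniteDimensional K L] (hn : n = Module.finrank K L)
    {u : L} (hu : ((wL.v u : ℤ) : ZMod n) = 0) :
    ∃ c : K, wL.ValGe (wL.v u + 1) (u - algebraMap K L c) := by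
  have : NeZero n := ⟨htot.1.ne'⟩
  obtain ⟨π, hπ0, hπ⟩ := wL.v_surj 1
  set b : Fin n → L := fun i => π ^ (i : ℕ)
  have hb0 : ∀ i, b i ≠ 0 := fun i => pow_ne_zero _ hπ0
  have hcls : ∀ i, ((wL.v (b i) : ℤ) : ZMod n) = ((i : ℕ) : ZMod n) := fun i => by
    simp [b, wL.v_pow hπ0, hπ]
  have hinj : Function.Injective fun i => ((wL.v (b i) : ℤ) : ZMod n) := fun i j hij => by
    have := congrArg ZMod.val ((hcls i).symm.trans (hij.trans (hcls j)))
    rw [ZMod.val_natCast, ZMod.val_natCast, Nat.mod_eq_of_lt i.2, Nat.mod_eq_of_lt j.2] at this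
    exact Fin.ext this
  have hspan := (htot.linearIndependent hb0 hinj).span_eq_top_of_card_eq_finrank
    (by simp [hn])
  have hu_mem : u ∈ Submodule.span K (Set.range b) := hspan ▸ Submodule.mem_top
  obtain ⟨c, hc⟩ := (Submodule.mem_span_range_iff_exists_fun K).mp hu_mem
  have hsum : wL.ValGe (wL.v u) (∑ i, c i • b i) := by
    rw [hc]
    exact valGe_v u
  have hterm : ∀ i ≠ 0, wL.ValGe (wL.v u + 1) (c i • b i) := by
    intro i hi hne
    have hge := htot.valGe_smul_of_valGe_sum hinj hsum i hne
    have hv : wL.v (c i • b i) ≠ wL.v u := fun e => hi <| hinj <| by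
      obtain ⟨hci, hbi⟩ := smul_ne_zero_iff.mp hne
      simp only [← htot.cast_v_smul hci hbi, e, hu, hcls 0, Fin.val_zero, Nat.cast_zero]
    omega
  refine ⟨c 0, ?_⟩
  have hdecomp : u - algebraMap K L (c 0) = ∑ i ∈ Finset.univ.erase 0, c i • b i := by
    rw [sub_eq_iff_eq_add', ← hc, ← Finset.add_sum_erase _ _ (Finset.mem_univ 0)]
    simp [b, Algebra.algebraMap_eq_smul_one]
  rw [hdecomp]
  exact ValGe.sum fun i hi => hterm i (Finset.ne_of_mem_erase hi)

theorem exists_sub_smul_valGe [FiniteDimensional K L] (hn : n = Module.finrank K L) {x y : L}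
    (hx : x ≠ 0) (hy : y ≠ 0) (hxy : ((wL.v x : ℤ) : ZMod n) = wL.v y) :
    ∃ c : K, wL.ValGe (wL.v y + 1) (y - c • x) := by
  have hu : y * x⁻¹ ≠ 0 := mul_ne_zero hy (inv_ne_zero hx)
  have hv : wL.v y = wL.v (y * x⁻¹) + wL.v x := by
    rw [← wL.v_mul _ _ hu hx, inv_mul_cancel_right₀ hx]
  obtain ⟨c, hc⟩ := htot.exists_sub_algebraMap_valGe hn (u := y * x⁻¹) <| by
    have := congrArg (Int.cast : ℤ → ZMod n) hv
    push_cast at this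
    linear_combination -this - hxy
  refine ⟨c, ?_⟩
  have := hc.mul (valGe_v x)
  rwa [sub_mul, inv_mul_cancel_right₀ hx, ← Algebra.smul_def, add_right_comm, ← hv] at this

omit [Fintype ι] in
theorem exists_mem_span_valGe [FiniteDimensional K L] (hn : n = Module.finrank K L)
    {W : Submodule K L} (hxW : ∀ i, x i ∈ W) (hx0 : ∀ i, x i ≠ 0)
    (hrep : ∀ y ∈ W, y ≠ 0 → ∃ i, ((wL.v (x i) : ℤ) : ZMod n) = wL.v y)
    {w : L} (hw : w ∈ W) (m : ℕ) :
    ∃ y ∈ Submodule.span K (Set.range x), wL.ValGe (wL.v w + m) (w - y) := by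
  induction m with
  | zero => exact ⟨0, Submodule.zero_mem _, by simpa using valGe_v w⟩
  | succ m ih =>
    obtain ⟨y, hy, hwy⟩ := ih
    rcases eq_or_ne (w - y) 0 with h0 | h0
    · exact ⟨y, hy, h0 ▸ valGe_zero _⟩
    have hspan : Submodule.span K (Set.range x) ≤ W :=
      Submodule.span_le.mpr (Set.range_subset_iff.mpr hxW)
    obtain ⟨i, hi⟩ := hrep (w - y) (W.sub_mem hw (hspan hy)) h0
    obtain ⟨c, hc⟩ := htot.exists_sub_smul_valGe hn (hx0 i) h0 hi
    refine ⟨y + c • x i, add_mem hy (Submodule.smul_mem _ _ (Submodule.subset_span ⟨i, rfl⟩)), ?_⟩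
    rw [← sub_sub]
    exact hc.mono (by have := hwy h0; push_cast; omega)

/-- The span of finitely many elements with distinct classes mod `n` is closed. -/
theorem mem_span_of_forall_valGe (hx0 : ∀ i, x i ≠ 0)
    (hx : Function.Injective fun i => ((wL.v (x i) : ℤ) : ZMod n)) {w : L}
    (hw : ∀ N : ℤ, ∃ y ∈ Submodule.span K (Set.range x), wL.ValGe N (w - y)) :
    w ∈ Submodule.span K (Set.range x) := by
  have hcoord : ∀ m : ℕ, ∃ γ : ι → K, wL.ValGe m (w - ∑ i, γ i • x i) := fun m => by
    obtain ⟨y, hy, hwy⟩ := hw m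
    obtain ⟨γ, rfl⟩ := (Submodule.mem_span_range_iff_exists_fun K).mp hy
    exact ⟨γ, hwy⟩
  choose γ hγ using hcoord
  have hcauchy : ∀ i N, ∃ M, ∀ m ≥ M, ∀ m' ≥ M, wK.ValGe N (γ m i - γ m' i) := by
    intro i N
    refine ⟨(n * N + wL.v (x i)).toNat, fun m hm m' hm' => htot.valGe_of_valGe_smul (hx0 i) ?_⟩
    have hdiff : ∑ j, (γ m j - γ m' j) • x j =
        (w - ∑ j, γ m' j • x j) - (w - ∑ j, γ m j • x j) := by
      simp only [sub_smul, Finset.sum_sub_distrib]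
      abel
    have hsum := ((hγ m').mono (M := n * N + wL.v (x i)) (by omega)).sub
      ((hγ m).mono (by omega))
    exact htot.valGe_smul_of_valGe_sum hx (hdiff ▸ hsum) i
  choose c hc using fun i => wK.exists_limit (hcauchy i)
  suffices hδ : w - ∑ i, c i • x i = 0 by
    rw [sub_eq_zero.mp hδ]
    exact (Submodule.mem_span_range_iff_exists_fun K).mpr ⟨c, rfl⟩
  by_contra hδ
  set N := wL.v (w - ∑ i, c i • x i) + 1
  have hterms : ∀ᶠ m in Filter.atTop, ∀ i, wL.ValGe N ((γ m i - c i) • x i) :=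
    Filter.eventually_all.mpr fun i => (hc i (max 0 (N - wL.v (x i)))).mono fun m hm =>
      (htot.valGe_smul hm (x i)).mono <| by
        have := le_mul_of_one_le_left (le_max_left 0 (N - wL.v (x i)))
          (show (1 : ℤ) ≤ n by exact_mod_cast htot.1)
        linarith [le_max_right 0 (N - wL.v (x i))]
  have hrest : ∀ᶠ m in Filter.atTop, wL.ValGe N (w - ∑ i, γ m i • x i) :=
    Filter.eventually_atTop.mpr ⟨N.toNat, fun m hm => (hγ m).mono (by omega)⟩
  obtain ⟨m, hm, hm'⟩ := (hterms.and hrest).exists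
  have hsplit : w - ∑ i, c i • x i = (w - ∑ i, γ m i • x i) + ∑ i, (γ m i - c i) • x i := by
    simp only [sub_smul, Finset.sum_sub_distrib]
    abel
  exact not_valGe_v_add_one hδ (hsplit ▸ hm'.add (ValGe.sum fun i _ => hm i))

theorem le_span [FiniteDimensional K L] (hn : n = Module.finrank K L) {W : Submodule K L}
    (hxW : ∀ i, x i ∈ W) (hx0 : ∀ i, x i ≠ 0)
    (hx : Function.Injective fun i => ((wL.v (x i) : ℤ) : ZMod n))
    (hrep : ∀ y ∈ W, y ≠ 0 → ∃ i, ((wL.v (x i) : ℤ) : ZMod n) = wL.v y) :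
    W ≤ Submodule.span K (Set.range x) := fun w hw =>
  htot.mem_span_of_forall_valGe hx0 hx fun N => by
    obtain ⟨y, hy, hwy⟩ := htot.exists_mem_span_valGe hn hxW hx0 hrep hw (N - wL.v w).toNat
    exact ⟨y, hy, hwy.mono (by omega)⟩

end Family

theorem ncard_valClasses [FiniteDimensional K L] (hn : n = Module.finrank K L)
    (W : Submodule K L) : (wL.valClasses n W).ncard = Module.finrank K W := by
  have : NeZero n := ⟨htot.1.ne'⟩
  set S := wL.valClasses n W
  have := Fintype.ofFinite S
  choose x hxW hx0 hxS using fun a : S => a.2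
  have hx : Function.Injective fun a => ((wL.v (x a) : ℤ) : ZMod n) :=
    fun a b h => Subtype.ext (by simpa only [hxS] using h)
  have hli : LinearIndependent K fun a => (⟨x a, hxW a⟩ : W) :=
    LinearIndependent.of_comp W.subtype (htot.linearIndependent hx0 hx)
  have hspan : W ≤ Submodule.span K (Set.range x) :=
    htot.le_span hn hxW hx0 hx fun y hy hy0 => ⟨⟨_, y, hy, hy0, rfl⟩, hxS _⟩
  rw [← Nat.card_coe_set_eq, Nat.card_eq_fintype_card]
  exact le_antisymm hli.fintype_card_le_finrank
    ((Submodule.finrank_mono hspan).trans (finrank_range_le_card x))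

theorem not_integral_trace [FiniteDimensional K L] (hn : n = Module.finrank K L) {d : ℤ}
    (hd : IsDifferentVal wK wL d) {z : L} (hz : z ≠ 0) (hvz : wL.v z = -d - 1) :
    ¬ wK.Integral (Algebra.trace K L z) := by
  intro hint
  suffices h : ∀ x : L, wL.ValGe (-d - 1) x → wK.Integral (Algebra.trace K L x) by
    have := (hd (-d - 1)).mp h
    omega
  intro x hx
  by_cases hx' : wL.ValGe (-d) x
  · exact (hd (-d)).mpr le_rfl x hx'
  obtain ⟨hx0, hvx⟩ : x ≠ 0 ∧ wL.v x < -d := by simpa [ValGe] using hx'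
  have hvx' : wL.v x = wL.v z := by
    have := hx hx0
    omega
  obtain ⟨c, hc⟩ := htot.exists_sub_smul_valGe hn hz hx0 (by rw [hvx'])
  have hcz : wL.ValGe (n * 0 + wL.v z) (c • z) := by
    rw [← sub_sub_cancel x (c • z)]
    exact (hx.sub (hc.mono (by omega))).mono (by omega)
  have hcint : wK.ValGe 0 c := htot.valGe_of_valGe_smul hz hcz
  rw [← sub_add_cancel x (c • z), map_add, map_smul, smul_eq_mul, integral_iff_valGe]
  refine ValGe.add ?_ (by simpa using hcint.mul (integral_iff_valGe.mp hint))
  exact integral_iff_valGe.mp ((hd (-d)).mpr le_rfl _ (hc.mono (by omega)))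

theorem trace_ne_zero [FiniteDimensional K L] (hn : n = Module.finrank K L) {d : ℤ}
    (hd : IsDifferentVal wK wL d) {z : L} (hz : z ≠ 0)
    (hvz : ((wL.v z : ℤ) : ZMod n) = ((-d - 1 : ℤ) : ZMod n)) :
    Algebra.trace K L z ≠ 0 := by
  obtain ⟨k, hk⟩ := (ZMod.intCast_eq_intCast_iff_dvd_sub _ _ _).mp hvz
  obtain ⟨a, ha0, hak⟩ := wK.v_surj k
  have hni := htot.not_integral_trace hn hd (smul_ne_zero ha0 hz)
    (by rw [htot.v_smul ha0 hz, hak]; linarith)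
  intro h0
  rw [map_smul, h0, smul_zero] at hni
  exact hni (Or.inl rfl)

end IsRamificationIndex

end LocalFieldStruct

open LocalFieldStruct in
/-- **Lemma (duality).** Let `L/K` be a finite separable totally ramified
extension of local fields of degree `n`, and let `d̄ = (-d_{L/K} - 1 mod n)`.
For every sub-`K`-vector space `V` of `L`, the set `s(V^⊥)` is the complement
in `ℤ/nℤ` of the set `d̄ - s(V)`, where `V^⊥` is the orthogonal space of `V`
with respect to the trace form. -/
theorem statement4 {K L : Type} [Field K] [Field L] [Algebra K L]
    [FiniteDimensional K L] [Algebra.IsSeparable K L]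
    (wK : LocalFieldStruct K) (wL : LocalFieldStruct L)
    (n : ℕ) (hn : n = Module.finrank K L)
    (htot : IsRamificationIndex wK wL n)
    (d : ℤ) (hd : IsDifferentVal wK wL d)
    (V : Submodule K L) :
    {a : ZMod n | ∃ y : L, (∀ x ∈ V, Algebra.trace K L (x * y) = 0) ∧
        y ≠ 0 ∧ ((wL.v y : ℤ) : ZMod n) = a} =
      ((fun a : ZMod n => ((-d - 1 : ℤ) : ZMod n) - a) ''
        {a : ZMod n | ∃ x ∈ V, x ≠ 0 ∧ ((wL.v x : ℤ) : ZMod n) = a})ᶜ := by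
  have : NeZero n := ⟨htot.1.ne'⟩
  set U := (Algebra.traceForm K L).orthogonal V
  have hU : {a : ZMod n | ∃ y : L, (∀ x ∈ V, Algebra.trace K L (x * y) = 0) ∧
      y ≠ 0 ∧ ((wL.v y : ℤ) : ZMod n) = a} = wL.valClasses n U := by
    simp [valClasses, U, LinearMap.BilinForm.mem_orthogonal_iff, and_comm]
  rw [hU]
  change _ = (_ '' wL.valClasses n V)ᶜ
  refine Set.eq_of_subset_of_ncard_le ?_ ?_
  · rintro _ ⟨y, hyU, hy0, rfl⟩ ⟨_, ⟨x, hxV, hx0, rfl⟩, hxy⟩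
    refine htot.trace_ne_zero hn hd (mul_ne_zero hx0 hy0) ?_
      (by simpa using LinearMap.BilinForm.mem_orthogonal_iff.mp hyU x hxV)
    rw [wL.v_mul _ _ hx0 hy0, Int.cast_add, ← hxy]
    ring
  · rw [Set.ncard_compl, Nat.card_zmod, Set.ncard_image_of_injective _ sub_right_injective,
      htot.ncard_valClasses hn, htot.ncard_valClasses hn,
      LinearMap.BilinForm.finrank_orthogonal (traceForm_nondegenerate K L), hn]
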